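/- arXiv:1708.08911 — 5 statements merged into one kernel-verified Lean document; each statement's English description precedes it below -/
import Mathlib

section
/- For every x > 0, the function t ↦ pen(t|θ) is differentiable at x and its derivative at x equals −λ⋆(x,θ). -/
noncomputable def pstar (l1 l0 θ x : ℝ) : ℝ :=
  θ * l1 * Real.exp (-l1 * |x|) /
    (θ * l1 * Real.exp (-l1 * |x|) + (1 - θ) * l0 * Real.exp (-l0 * |x|))

noncomputable def lamstar (l1 l0 θ x : ℝ) : ℝ :=
  l1 * pstar l1 l0 θ x + l0 * (1 - pstar l1 l0 θ x)

noncomputable def ssDensity (l1 l0 θ x : ℝ) : ℝ :=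
  θ * (l1 / 2) * Real.exp (-l1 * |x|) + (1 - θ) * (l0 / 2) * Real.exp (-l0 * |x|)

noncomputable def pen (l1 l0 θ x : ℝ) : ℝ :=
  Real.log (ssDensity l1 l0 θ x / ssDensity l1 l0 θ 0)

/-!
On `x > 0` the density is a sum of two exponentials in `x`, whose derivative is
`-(θ l1² e^{-l1 x} + (1-θ) l0² e^{-l0 x}) / 2`; this is exactly `-λ⋆(x) π(x)`, since `p⋆` is
the relative weight of the slab in `π(x)`. Hence `pen' = π'/π = -λ⋆`.
-/

theorem ssDensity_pos {l1 l0 θ : ℝ} (hl1 : 0 < l1) (hl0 : 0 < l0) (hθ : θ ∈ Set.Ioo (0 : ℝ) 1)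
    (x : ℝ) : 0 < ssDensity l1 l0 θ x := by
  obtain ⟨hθ0, hθ1⟩ := hθ
  have hθ1' : 0 < 1 - θ := sub_pos.mpr hθ1
  unfold ssDensity
  positivity

theorem lamstar_mul_ssDensity {l1 l0 θ x : ℝ} (h : ssDensity l1 l0 θ x ≠ 0) :
    lamstar l1 l0 θ x * ssDensity l1 l0 θ x =
      (l1 * (θ * l1 * Real.exp (-l1 * |x|)) + l0 * ((1 - θ) * l0 * Real.exp (-l0 * |x|))) / 2 := by
  have hπ : ssDensity l1 l0 θ x =
      (θ * l1 * Real.exp (-l1 * |x|) + (1 - θ) * l0 * Real.exp (-l0 * |x|)) / 2 := by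
    rw [ssDensity]
    ring
  rw [hπ] at h ⊢
  rw [lamstar, pstar]
  generalize θ * l1 * Real.exp (-l1 * |x|) = a, (1 - θ) * l0 * Real.exp (-l0 * |x|) = b at h ⊢
  have hab : a + b ≠ 0 := by simpa using h
  rw [one_sub_div hab, add_sub_cancel_left]
  field_simp

theorem hasDerivAt_ssDensity_of_pos {l1 l0 θ x : ℝ} (hx : 0 < x) :
    HasDerivAt (ssDensity l1 l0 θ)
      (-((l1 * (θ * l1 * Real.exp (-l1 * x)) + l0 * ((1 - θ) * l0 * Real.exp (-l0 * x))) / 2)) x := by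
  have hexp (l : ℝ) : HasDerivAt (fun t => Real.exp (-l * t)) (Real.exp (-l * x) * -l) x := by
    simpa using ((hasDerivAt_id x).const_mul (-l)).exp
  have hsmooth := ((hexp l1).const_mul (θ * (l1 / 2))).add ((hexp l0).const_mul ((1 - θ) * (l0 / 2)))
  have hev : ssDensity l1 l0 θ =ᶠ[nhds x]
      fun t => θ * (l1 / 2) * Real.exp (-l1 * t) + (1 - θ) * (l0 / 2) * Real.exp (-l0 * t) := by
    filter_upwards [eventually_gt_nhds hx] with t ht
    rw [ssDensity, abs_of_pos ht]
  exact (hsmooth.congr_of_eventuallyEq hev).congr_deriv (by ring)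

theorem hasDerivAt_ssDensity_eq_neg_lamstar_mul {l1 l0 θ x : ℝ} (hx : 0 < x)
    (h : ssDensity l1 l0 θ x ≠ 0) :
    HasDerivAt (ssDensity l1 l0 θ) (-(lamstar l1 l0 θ x * ssDensity l1 l0 θ x)) x := by
  rw [lamstar_mul_ssDensity h, abs_of_pos hx]
  exact hasDerivAt_ssDensity_of_pos hx

theorem stmt3 (l1 l0 θ : ℝ) (hl1 : 0 < l1) (hl : l1 < l0) (hθ : θ ∈ Set.Ioo (0 : ℝ) 1) :
    ∀ x : ℝ, 0 < x → HasDerivAt (fun t : ℝ => pen l1 l0 θ t) (-(lamstar l1 l0 θ x)) x := by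
  intro x hx
  have hπ (t : ℝ) : ssDensity l1 l0 θ t ≠ 0 := (ssDensity_pos hl1 (hl1.trans hl) hθ t).ne'
  have hlog := ((hasDerivAt_ssDensity_eq_neg_lamstar_mul hx (hπ x)).div_const
    (ssDensity l1 l0 θ 0)).log (div_ne_zero (hπ x) (hπ 0))
  convert hlog using 1
  · rfl
  · field_simp [hπ x, hπ 0]
end

section
/- For every x > 0, the second derivative of the function t ↦ pen(t|θ) at x equals (λ0 − λ1)² · p⋆(x,θ) · (1 − p⋆(x,θ)), which is strictly positive; consequently, the function t ↦ pen(t|θ) is strictly convex on (0, ∞). -/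
open Real

noncomputable def expMix (a b u v t : ℝ) : ℝ :=
  a * exp (-u * t) + b * exp (-v * t)

noncomputable def expMixWeight (a b u v t : ℝ) : ℝ :=
  a * exp (-u * t) / expMix a b u v t

section ExpMix

variable {a b u v : ℝ}

theorem expMix_pos (ha : 0 < a) (hb : 0 < b) (t : ℝ) : 0 < expMix a b u v t := by
  unfold expMix; positivity

theorem hasDerivAt_expMix (a b u v t : ℝ) :
    HasDerivAt (expMix a b u v) (-expMix (u * a) (v * b) u v t) t := by
  have hexp (c : ℝ) : HasDerivAt (fun t => exp (-c * t)) (-c * exp (-c * t)) t := by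
    simpa [mul_comm] using ((hasDerivAt_id t).const_mul (-c)).exp
  refine (((hexp u).const_mul a).add ((hexp v).const_mul b)).congr_deriv ?_
  simp only [expMix]; ring

theorem continuous_expMix (a b u v : ℝ) : Continuous (expMix a b u v) := by
  unfold expMix; fun_prop

theorem deriv_log_expMix (ha : 0 < a) (hb : 0 < b) :
    deriv (fun t => log (expMix a b u v t)) = -expMix (u * a) (v * b) u v / expMix a b u v :=
  funext fun t => ((hasDerivAt_expMix a b u v t).log (expMix_pos ha hb t).ne').deriv

theorem expMixWeight_pos (ha : 0 < a) (hb : 0 < b) (t : ℝ) : 0 < expMixWeight a b u v t :=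
  div_pos (by positivity) (expMix_pos ha hb t)

theorem expMixWeight_lt_one (ha : 0 < a) (hb : 0 < b) (t : ℝ) : expMixWeight a b u v t < 1 := by
  rw [expMixWeight, div_lt_one (expMix_pos ha hb t), expMix]
  linarith [mul_pos hb (exp_pos (-v * t))]

-- `(u²A + v²B)(A + B) - (uA + vB)² = (u - v)² A B`, with `A = a e^{-ut}`, `B = b e^{-vt}`.
theorem deriv_deriv_log_expMix (ha : 0 < a) (hb : 0 < b) (t : ℝ) :
    deriv (deriv fun t => log (expMix a b u v t)) t =
      (u - v) ^ 2 * expMixWeight a b u v t * (1 - expMixWeight a b u v t) := by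
  have hne := (expMix_pos ha hb t (u := u) (v := v)).ne'
  rw [deriv_log_expMix ha hb,
    ((hasDerivAt_expMix (u * a) (v * b) u v t).neg.div (hasDerivAt_expMix a b u v t) hne).deriv,
    Pi.neg_apply, expMixWeight]
  field_simp
  simp only [expMix, neg_mul]
  ring

theorem sq_mul_expMixWeight_mul_one_sub_pos (ha : 0 < a) (hb : 0 < b) (huv : u ≠ v) (t : ℝ) :
    0 < (u - v) ^ 2 * expMixWeight a b u v t * (1 - expMixWeight a b u v t) := by
  have := sq_pos_of_ne_zero (sub_ne_zero.2 huv)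
  have := expMixWeight_pos ha hb t (u := u) (v := v)
  have := sub_pos.2 (expMixWeight_lt_one ha hb t (u := u) (v := v))
  positivity

theorem strictConvexOn_log_expMix (ha : 0 < a) (hb : 0 < b) (huv : u ≠ v) :
    StrictConvexOn ℝ Set.univ fun t => log (expMix a b u v t) := by
  refine strictConvexOn_of_deriv2_pos' convex_univ
    ((continuous_expMix a b u v).log fun t => (expMix_pos ha hb t).ne').continuousOn
    fun t _ => ?_
  rw [Function.iterate_succ_apply, Function.iterate_one, deriv_deriv_log_expMix ha hb]
  exact sq_mul_expMixWeight_mul_one_sub_pos ha hb huv t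

end ExpMix

theorem ssDensity_eq_expMix (l1 l0 θ x : ℝ) :
    ssDensity l1 l0 θ x = expMix (θ * l1) ((1 - θ) * l0) l1 l0 |x| / 2 := by
  rw [ssDensity, expMix]; ring

theorem pstar_eq_expMixWeight (l1 l0 θ x : ℝ) :
    pstar l1 l0 θ x = expMixWeight (θ * l1) ((1 - θ) * l0) l1 l0 |x| := rfl

theorem pen_eq_log_expMix_sub {l1 l0 θ : ℝ} (h1 : 0 < θ * l1) (h0 : 0 < (1 - θ) * l0) (x : ℝ) :
    pen l1 l0 θ x = log (expMix (θ * l1) ((1 - θ) * l0) l1 l0 |x|)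
      - log (expMix (θ * l1) ((1 - θ) * l0) l1 l0 0) := by
  rw [pen, ssDensity_eq_expMix, ssDensity_eq_expMix, abs_zero,
    div_div_div_cancel_right₀ two_ne_zero,
    log_div (expMix_pos h1 h0 _).ne' (expMix_pos h1 h0 _).ne']

theorem stmt5 (l1 l0 θ : ℝ) (hl1 : 0 < l1) (hl : l1 < l0) (hθ : θ ∈ Set.Ioo (0 : ℝ) 1) :
    (∀ x : ℝ, 0 < x →
      deriv (deriv (fun t : ℝ => pen l1 l0 θ t)) x =
          (l0 - l1) ^ 2 * pstar l1 l0 θ x * (1 - pstar l1 l0 θ x) ∧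
      0 < (l0 - l1) ^ 2 * pstar l1 l0 θ x * (1 - pstar l1 l0 θ x)) ∧
    StrictConvexOn ℝ (Set.Ioi (0 : ℝ)) (fun t : ℝ => pen l1 l0 θ t) := by
  have h1 : 0 < θ * l1 := mul_pos hθ.1 hl1
  have h0 : 0 < (1 - θ) * l0 := mul_pos (sub_pos.2 hθ.2) (hl1.trans hl)
  set L := fun t => log (expMix (θ * l1) ((1 - θ) * l0) l1 l0 t)
  have hpen : Set.EqOn (fun t => L t + -L 0) (fun t => pen l1 l0 θ t) (Set.Ioi 0) :=
    fun t (ht : 0 < t) => show L t + -L 0 = pen l1 l0 θ t by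
      rw [pen_eq_log_expMix_sub h1 h0, abs_of_pos ht, sub_eq_add_neg]
  refine ⟨fun x hx => ?_, ?_⟩
  · rw [sub_sq_comm l0 l1, ← (hpen.eventuallyEq_of_mem (Ioi_mem_nhds hx)).deriv.deriv_eq, deriv_add_const',
      deriv_deriv_log_expMix h1 h0, pstar_eq_expMixWeight, abs_of_pos hx]
    exact ⟨rfl, sq_mul_expMixWeight_mul_one_sub_pos h1 h0 hl.ne x⟩
  · exact (((strictConvexOn_log_expMix h1 h0 hl.ne).subset (Set.subset_univ _)
      (convex_Ioi 0)).add_const (-L 0)).congr hpen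
end

section
/- For every real number x, λ1 < λ⋆(x,θ) < λ0; moreover, for all real numbers x1, x2 with 0 ≤ x1 < x2, one has λ⋆(x2,θ) < λ⋆(x1,θ), i.e., the adaptive penalty λ⋆ is strictly decreasing as a function of |x| and always lies strictly between the slab penalty λ1 and the spike penalty λ0. -/
/-!
Write `p⋆ = 1 / (1 + odds)`, where the odds are the prior odds `(1 - θ) λ0 / (θ λ1)` damped by
`exp (-(λ0 - λ1) |x|)`; so `p⋆ ∈ (0, 1)` and `p⋆` strictly increases with `|x|` when `λ1 < λ0`.
Both claims follow because `λ⋆ = λ0 - (λ0 - λ1) p⋆` is a strictly decreasing affine function of `p⋆`.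
-/

open Real

section

variable {l1 l0 θ : ℝ}

lemma pstar_eq_inv_one_add (hθ : θ ≠ 0) (hl1 : l1 ≠ 0) (x : ℝ) :
    pstar l1 l0 θ x = (1 + (1 - θ) * l0 / (θ * l1) * exp (-(l0 - l1) * |x|))⁻¹ := by
  have hexp : exp (-l0 * |x|) = exp (-(l0 - l1) * |x|) * exp (-l1 * |x|) := by
    rw [← exp_add]; ring_nf
  rw [pstar, hexp]
  field_simp

lemma pstar_mem_Ioo (hl1 : 0 < l1) (hl0 : 0 < l0) (hθ : θ ∈ Set.Ioo (0 : ℝ) 1) (x : ℝ) :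
    pstar l1 l0 θ x ∈ Set.Ioo 0 1 := by
  obtain ⟨hθ0, hθ1⟩ := hθ
  have hodds : 0 < (1 - θ) * l0 / (θ * l1) * exp (-(l0 - l1) * |x|) := by
    have : 0 < 1 - θ := by linarith
    positivity
  rw [pstar_eq_inv_one_add hθ0.ne' hl1.ne']
  exact ⟨by positivity, inv_lt_one_of_one_lt₀ (by linarith)⟩

lemma pstar_lt_pstar_of_abs_lt (hl1 : 0 < l1) (hl : l1 < l0) (hθ : θ ∈ Set.Ioo (0 : ℝ) 1)
    {x y : ℝ} (hxy : |x| < |y|) : pstar l1 l0 θ x < pstar l1 l0 θ y := by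
  obtain ⟨hθ0, hθ1⟩ := hθ
  have hprior : 0 < (1 - θ) * l0 / (θ * l1) := by
    have : 0 < 1 - θ := by linarith
    have : 0 < l0 := hl1.trans hl
    positivity
  have hdamp : exp (-(l0 - l1) * |y|) < exp (-(l0 - l1) * |x|) :=
    exp_lt_exp.mpr (by nlinarith)
  rw [pstar_eq_inv_one_add hθ0.ne' hl1.ne', pstar_eq_inv_one_add hθ0.ne' hl1.ne']
  gcongr

lemma lamstar_eq_sub_mul_pstar (x : ℝ) :
    lamstar l1 l0 θ x = l0 - (l0 - l1) * pstar l1 l0 θ x := by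
  rw [lamstar]; ring

end

theorem stmt7 (l1 l0 θ : ℝ) (hl1 : 0 < l1) (hl : l1 < l0) (hθ : θ ∈ Set.Ioo (0 : ℝ) 1) :
    (∀ x : ℝ, l1 < lamstar l1 l0 θ x ∧ lamstar l1 l0 θ x < l0) ∧
    (∀ x1 x2 : ℝ, 0 ≤ x1 → x1 < x2 → lamstar l1 l0 θ x2 < lamstar l1 l0 θ x1) := by
  have hgap : 0 < l0 - l1 := sub_pos.mpr hl
  refine ⟨fun x => ?_, fun x1 x2 hx1 hx12 => ?_⟩
  · obtain ⟨hp0, hp1⟩ := pstar_mem_Ioo hl1 (hl1.trans hl) hθ x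
    rw [lamstar_eq_sub_mul_pstar]
    constructor <;> nlinarith
  · have habs : |x1| < |x2| := by
      rwa [abs_of_nonneg hx1, abs_of_nonneg (hx1.trans hx12.le)]
    have hp := pstar_lt_pstar_of_abs_lt hl1 hl hθ habs
    rw [lamstar_eq_sub_mul_pstar, lamstar_eq_sub_mul_pstar]
    nlinarith
end

section
/- Let n > 0 and z be real numbers, and let ρ : ℝ → ℝ be an even function with ρ(0) = 0. Define Δ = inf_{t>0} { n t/2 − ρ(t)/t } (an extended real number) and g(b) = z b − (n/2) b² + ρ(b). Then: (i) if |z| < Δ, then g(b) < g(0) for every b ≠ 0, so that 0 is the unique global maximizer of g; and (ii) if |z| > Δ, then there exists b ∈ ℝ with g(b) > g(0), so that 0 is not a global maximizer of g. -/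
/-!
Multiplying by `t > 0`, the condition `|z| < n t / 2 - ρ t / t` says exactly that
`|z| t - (n/2) t² + ρ t < 0`. For even `ρ` this expression dominates `g b - g 0` at every `b`
with `|b| = t`, with equality at the `b = ± t` whose sign is that of `z`.
So `|z| < Δ` makes `g` negative away from `0`, while `Δ < |z|` produces a `t` at which it is positive.
-/

section

variable {ρ : ℝ → ℝ}

lemma apply_abs_eq_of_even (heven : ∀ x : ℝ, ρ (-x) = ρ x) (x : ℝ) : ρ |x| = ρ x := by
  rcases abs_choice x with h | h <;> simp [h, heven]

lemma mul_sub_add_eq_mul_sub_sub_div (c a r : ℝ) {t : ℝ} (ht : t ≠ 0) :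
    c * t - a / 2 * t ^ 2 + r = t * (c - (a * t / 2 - r / t)) := by
  field_simp
  ring

lemma mul_sub_add_le_abs (heven : ∀ x : ℝ, ρ (-x) = ρ x) (z a b : ℝ) :
    z * b - a / 2 * b ^ 2 + ρ b ≤ |z| * |b| - a / 2 * |b| ^ 2 + ρ |b| := by
  rw [apply_abs_eq_of_even heven, sq_abs, ← abs_mul]
  linarith [le_abs_self (z * b)]

lemma exists_mul_sub_add_eq_abs (heven : ∀ x : ℝ, ρ (-x) = ρ x) (z a t : ℝ) :
    ∃ b, z * b - a / 2 * b ^ 2 + ρ b = |z| * t - a / 2 * t ^ 2 + ρ t := by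
  rcases le_or_gt 0 z with hz | hz
  · exact ⟨t, by rw [abs_of_nonneg hz]⟩
  · exact ⟨-t, by rw [abs_of_neg hz, heven]; ring⟩

end

theorem stmt10_general (n z : ℝ)
    (ρ : ℝ → ℝ) (heven : ∀ x : ℝ, ρ (-x) = ρ x) (hρ0 : ρ 0 = 0)
    (Δ : EReal)
    (hΔ : Δ = sInf {v : EReal | ∃ t : ℝ, 0 < t ∧
      v = ((n * t / 2 - ρ t / t : ℝ) : EReal)})
    (g : ℝ → ℝ) (hg : ∀ b : ℝ, g b = z * b - n / 2 * b ^ 2 + ρ b) :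
    (((|z| : ℝ) : EReal) < Δ → ∀ b : ℝ, b ≠ 0 → g b < g 0) ∧
    (Δ < ((|z| : ℝ) : EReal) → ∃ b : ℝ, g 0 < g b) := by
  have hg0 : g 0 = 0 := by simp [hg, hρ0]
  constructor
  · intro h b hb
    have hb' : 0 < |b| := abs_pos.mpr hb
    have hz : |z| < n * |b| / 2 - ρ |b| / |b| :=
      EReal.coe_lt_coe_iff.mp (h.trans_le (hΔ ▸ sInf_le ⟨|b|, hb', rfl⟩))
    calc g b ≤ |z| * |b| - n / 2 * |b| ^ 2 + ρ |b| := hg b ▸ mul_sub_add_le_abs heven z n b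
      _ = |b| * (|z| - (n * |b| / 2 - ρ |b| / |b|)) :=
        mul_sub_add_eq_mul_sub_sub_div _ _ _ hb'.ne'
      _ < 0 := mul_neg_of_pos_of_neg hb' (sub_neg.mpr hz)
      _ = g 0 := hg0.symm
  · intro h
    obtain ⟨_, ⟨t, ht, rfl⟩, hlt⟩ := sInf_lt_iff.mp (hΔ ▸ h)
    have hz : n * t / 2 - ρ t / t < |z| := EReal.coe_lt_coe_iff.mp hlt
    obtain ⟨b, hb⟩ := exists_mul_sub_add_eq_abs heven z n t
    refine ⟨b, ?_⟩
    rw [hg0, hg, hb, mul_sub_add_eq_mul_sub_sub_div _ _ _ ht.ne']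
    exact mul_pos ht (sub_pos.mpr hz)

theorem stmt10 (n z : ℝ) (hn : 0 < n)
    (ρ : ℝ → ℝ) (heven : ∀ x : ℝ, ρ (-x) = ρ x) (hρ0 : ρ 0 = 0)
    (Δ : EReal)
    (hΔ : Δ = sInf {v : EReal | ∃ t : ℝ, 0 < t ∧
      v = ((n * t / 2 - ρ t / t : ℝ) : EReal)})
    (g : ℝ → ℝ) (hg : ∀ b : ℝ, g b = z * b - n / 2 * b ^ 2 + ρ b) :
    (((|z| : ℝ) : EReal) < Δ → ∀ b : ℝ, b ≠ 0 → g b < g 0) ∧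
    (Δ < ((|z| : ℝ) : EReal) → ∃ b : ℝ, g 0 < g b) :=
  stmt10_general n z ρ heven hρ0 Δ hΔ g hg
end

section
/- Under the probability measure μ on {0,1} × ℝ, the function (γ, x) ↦ p⋆(x,θ) is a version of the conditional expectation of the function (γ, x) ↦ γ given the σ-algebra generated by the projection (γ, x) ↦ x; that is, E_μ[γ | x] = p⋆(x,θ) holds μ-almost everywhere. -/
open MeasureTheory

noncomputable def laplaceMeasure (l : ℝ) : Measure ℝ :=
  volume.withDensity fun x => ENNReal.ofReal (l / 2 * Real.exp (-l * |x|))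

/-! Write φᵢ for the Laplace(λᵢ) density, so that `ssDensity` is the marginal density
m = θ φ₁ + (1 - θ) φ₀ of x and, by Bayes' rule, p⋆ = θ φ₁ / m. For a Borel set t, the integral
of γ over {x ∈ t} only sees the slab component and equals θ ∫_t φ₁, while that of p⋆(x) equals
∫_t p⋆ m = θ ∫_t φ₁ as well. Since p⋆(x) is σ(x)-measurable, uniqueness of conditional
expectations concludes. -/

open Set

noncomputable def laplacePDF (l x : ℝ) : ℝ := l / 2 * Real.exp (-l * |x|)

lemma laplacePDF_nonneg {l : ℝ} (hl : 0 ≤ l) (x : ℝ) : 0 ≤ laplacePDF l x := by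
  unfold laplacePDF
  positivity

lemma laplacePDF_pos {l : ℝ} (hl : 0 < l) (x : ℝ) : 0 < laplacePDF l x := by
  unfold laplacePDF
  positivity

noncomputable def spikeSlabMeasure (l1 l0 θ : ℝ) : Measure (Fin 2 × ℝ) :=
  ENNReal.ofReal θ • ((Measure.dirac (1 : Fin 2)).prod (laplaceMeasure l1)) +
    ENNReal.ofReal (1 - θ) • ((Measure.dirac (0 : Fin 2)).prod (laplaceMeasure l0))

lemma integrable_comp_abs_of_integrableOn_Ioi {E : Type*} [NormedAddCommGroup E] {f : ℝ → E}
    (hf : IntegrableOn f (Ioi 0)) : Integrable fun x => f |x| := by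
  have hIoi : IntegrableOn (fun x => f |x|) (Ioi 0) :=
    hf.congr_fun (fun x hx => by rw [abs_of_pos hx]) measurableSet_Ioi
  have hIic : IntegrableOn (fun x => f |x|) (Iic 0) := by
    have hneg : MeasurableEmbedding fun x : ℝ => -x := (Homeomorph.neg ℝ).measurableEmbedding
    rw [← Measure.map_neg_eq_self (volume : Measure ℝ), hneg.integrableOn_map_iff]
    simp_rw [Function.comp_def, abs_neg, neg_preimage, neg_Iic, neg_zero]
    exact Iff.mpr integrableOn_Ici_iff_integrableOn_Ioi hIoi
  simpa using hIic.union hIoi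

lemma integrable_laplacePDF {l : ℝ} (hl : 0 < l) : Integrable (laplacePDF l) :=
  (integrable_comp_abs_of_integrableOn_Ioi (exp_neg_integrableOn_Ioi 0 hl)).const_mul _

instance isFiniteMeasure_laplaceMeasure (l : ℝ) : IsFiniteMeasure (laplaceMeasure l) := by
  rcases lt_or_ge 0 l with hl | hl
  · exact isFiniteMeasure_withDensity_ofReal (integrable_laplacePDF hl).hasFiniteIntegral
  · have hzero : (fun x => ENNReal.ofReal (l / 2 * Real.exp (-l * |x|))) = 0 := by
      ext x
      exact ENNReal.ofReal_of_nonpos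
        (mul_nonpos_of_nonpos_of_nonneg (by linarith) (Real.exp_pos _).le)
    rw [laplaceMeasure, hzero, withDensity_zero]
    infer_instance

lemma setIntegral_laplaceMeasure {E : Type*} [NormedAddCommGroup E] [NormedSpace ℝ E]
    {l : ℝ} (hl : 0 ≤ l) (g : ℝ → E) {t : Set ℝ} (ht : MeasurableSet t) :
    ∫ x in t, g x ∂laplaceMeasure l = ∫ x in t, laplacePDF l x • g x := by
  rw [laplaceMeasure, setIntegral_withDensity_eq_setIntegral_toReal_smul (by fun_prop)
    (Filter.Eventually.of_forall fun _ => ENNReal.ofReal_lt_top) g ht]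
  exact setIntegral_congr_fun ht fun x _ =>
    congrArg (· • g x) (ENNReal.toReal_ofReal (laplacePDF_nonneg hl x))

lemma setIntegral_dirac_prod_preimage_snd {α β E : Type*} [MeasurableSpace α]
    [MeasurableSingletonClass α] [MeasurableSpace β] [NormedAddCommGroup E] [NormedSpace ℝ E]
    (a : α) (ν : Measure β) [SFinite ν] (g : α × β → E) (t : Set β) :
    ∫ p in Prod.snd ⁻¹' t, g p ∂(Measure.dirac a).prod ν = ∫ x in t, g (a, x) ∂ν := by
  have he := measurableEmbedding_prodMk_left (β := β) a
  rw [Measure.dirac_prod, he.restrict_map, he.integral_map]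
  rfl

instance isFiniteMeasure_spikeSlabMeasure (l1 l0 θ : ℝ) :
    IsFiniteMeasure (spikeSlabMeasure l1 l0 θ) :=
  @isFiniteMeasureAdd _ _ _ _ (Measure.smul_finite _ ENNReal.ofReal_ne_top)
    (Measure.smul_finite _ ENNReal.ofReal_ne_top)

lemma setIntegral_spikeSlabMeasure_preimage_snd {l1 l0 θ : ℝ} (hl1 : 0 ≤ l1) (hl0 : 0 ≤ l0)
    (hθ : θ ∈ Icc (0 : ℝ) 1) {h : Fin 2 × ℝ → ℝ} (hh : Integrable h (spikeSlabMeasure l1 l0 θ))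
    {t : Set ℝ} (ht : MeasurableSet t) :
    ∫ p in Prod.snd ⁻¹' t, h p ∂spikeSlabMeasure l1 l0 θ =
      θ * (∫ x in t, laplacePDF l1 x * h (1, x)) +
        (1 - θ) * ∫ x in t, laplacePDF l0 x * h (0, x) := by
  have hint := hh.restrict (s := Prod.snd ⁻¹' t)
  rw [spikeSlabMeasure, Measure.restrict_add] at hint ⊢
  rw [integral_add_measure hint.left_of_add_measure hint.right_of_add_measure,
    Measure.restrict_smul, Measure.restrict_smul, integral_smul_measure, integral_smul_measure,
    ENNReal.toReal_ofReal hθ.1, ENNReal.toReal_ofReal (by linarith [hθ.2]),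
    setIntegral_dirac_prod_preimage_snd, setIntegral_dirac_prod_preimage_snd,
    setIntegral_laplaceMeasure hl1 _ ht, setIntegral_laplaceMeasure hl0 _ ht]
  simp only [smul_eq_mul]

lemma comp_snd_ae_eq_condExp_comap_snd {α β E : Type*} [MeasurableSpace α] [MeasurableSpace β]
    [NormedAddCommGroup E] [NormedSpace ℝ E] [CompleteSpace E]
    {μ : Measure (α × β)} [IsFiniteMeasure μ] {f : α × β → E} {g : β → E}
    (hf : Integrable f μ) (hg : StronglyMeasurable g) (hgi : Integrable (fun p => g p.2) μ)
    (hfg : ∀ t, MeasurableSet t →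
      ∫ p in Prod.snd ⁻¹' t, g p.2 ∂μ = ∫ p in Prod.snd ⁻¹' t, f p ∂μ) :
    (fun p => g p.2) =ᵐ[μ] μ[f | MeasurableSpace.comap Prod.snd ‹MeasurableSpace β›] := by
  refine ae_eq_condExp_of_forall_setIntegral_eq measurable_snd.comap_le hf
    (fun _ _ _ => hgi.integrableOn) ?_
    (hg.comp_measurable (measurable_iff_comap_le.mpr le_rfl)).aestronglyMeasurable
  rintro _ ⟨t, ht, rfl⟩ _
  exact hfg t ht

lemma ssDensity_eq (l1 l0 θ x : ℝ) :
    ssDensity l1 l0 θ x = θ * laplacePDF l1 x + (1 - θ) * laplacePDF l0 x := by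
  simp only [ssDensity, laplacePDF]
  ring

lemma pstar_eq_div_ssDensity (l1 l0 θ x : ℝ) :
    pstar l1 l0 θ x = θ * laplacePDF l1 x / ssDensity l1 l0 θ x := by
  have hnum : θ * laplacePDF l1 x = θ * l1 * Real.exp (-l1 * |x|) / 2 := by
    unfold laplacePDF
    ring
  have hden : ssDensity l1 l0 θ x =
      (θ * l1 * Real.exp (-l1 * |x|) + (1 - θ) * l0 * Real.exp (-l0 * |x|)) / 2 := by
    unfold ssDensity
    ring
  rw [pstar, hnum, hden, div_div_div_cancel_right₀ two_ne_zero]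

lemma measurable_pstar (l1 l0 θ : ℝ) : Measurable (pstar l1 l0 θ) := by
  unfold pstar
  fun_prop

lemma pstar_mem_Icc {l1 l0 θ : ℝ} (hl1 : 0 ≤ l1) (hl0 : 0 ≤ l0) (hθ : θ ∈ Icc (0 : ℝ) 1)
    (x : ℝ) : pstar l1 l0 θ x ∈ Icc (0 : ℝ) 1 := by
  have h1 : 0 ≤ θ * laplacePDF l1 x := mul_nonneg hθ.1 (laplacePDF_nonneg hl1 x)
  have h0 : 0 ≤ (1 - θ) * laplacePDF l0 x :=
    mul_nonneg (sub_nonneg.mpr hθ.2) (laplacePDF_nonneg hl0 x)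
  rw [pstar_eq_div_ssDensity, ssDensity_eq]
  exact ⟨by positivity, div_le_one_of_le₀ (by linarith) (by positivity)⟩

lemma pstar_mul_ssDensity {l1 l0 θ : ℝ} (hl1 : 0 < l1) (hl0 : 0 ≤ l0) (hθ : θ ∈ Ioo (0 : ℝ) 1)
    (x : ℝ) : pstar l1 l0 θ x * ssDensity l1 l0 θ x = θ * laplacePDF l1 x := by
  have hpos : 0 < ssDensity l1 l0 θ x := by
    rw [ssDensity_eq]
    exact add_pos_of_pos_of_nonneg (mul_pos hθ.1 (laplacePDF_pos hl1 x))
      (mul_nonneg (sub_nonneg.mpr hθ.2.le) (laplacePDF_nonneg hl0 x))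
  rw [pstar_eq_div_ssDensity, div_mul_cancel₀ _ hpos.ne']

lemma norm_pstar_le_one {l1 l0 θ : ℝ} (hl1 : 0 ≤ l1) (hl0 : 0 ≤ l0) (hθ : θ ∈ Icc (0 : ℝ) 1)
    (x : ℝ) : ‖pstar l1 l0 θ x‖ ≤ 1 := by
  obtain ⟨h0, h1⟩ := pstar_mem_Icc hl1 hl0 hθ x
  rwa [Real.norm_of_nonneg h0]

lemma setIntegral_laplacePDF_mul_pstar {l1 l0 θ : ℝ} (hl1 : 0 < l1) (hl0 : 0 < l0)
    (hθ : θ ∈ Ioo (0 : ℝ) 1) (t : Set ℝ) :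
    θ * (∫ x in t, laplacePDF l1 x * pstar l1 l0 θ x) +
        (1 - θ) * ∫ x in t, laplacePDF l0 x * pstar l1 l0 θ x =
      θ * ∫ x in t, laplacePDF l1 x := by
  have hint {l : ℝ} (hl : 0 < l) :
      Integrable (fun x => laplacePDF l x * pstar l1 l0 θ x) (volume.restrict t) :=
    ((integrable_laplacePDF hl).mul_bdd (measurable_pstar l1 l0 θ).aestronglyMeasurable
      (.of_forall (norm_pstar_le_one hl1.le hl0.le (Ioo_subset_Icc_self hθ)))).restrict
  rw [← integral_const_mul, ← integral_const_mul, ← integral_const_mul,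
    ← integral_add ((hint hl1).const_mul θ) ((hint hl0).const_mul (1 - θ))]
  congr 1 with x
  rw [← pstar_mul_ssDensity hl1 hl0.le hθ x, ssDensity_eq]
  ring

theorem stmt13 (l1 l0 θ : ℝ) (hl1 : 0 < l1) (hl : l1 < l0) (hθ : θ ∈ Set.Ioo (0 : ℝ) 1)
    (μ : Measure (Fin 2 × ℝ))
    (hμ : μ = ENNReal.ofReal θ • ((Measure.dirac (1 : Fin 2)).prod (laplaceMeasure l1)) +
      ENNReal.ofReal (1 - θ) • ((Measure.dirac (0 : Fin 2)).prod (laplaceMeasure l0))) :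
    (fun p : Fin 2 × ℝ => pstar l1 l0 θ p.2) =ᵐ[μ]
      μ[(fun p : Fin 2 × ℝ => ((p.1 : ℕ) : ℝ)) |
        MeasurableSpace.comap (Prod.snd : Fin 2 × ℝ → ℝ) inferInstance] := by
  change μ = spikeSlabMeasure l1 l0 θ at hμ
  subst hμ
  have hl0 : 0 < l0 := hl1.trans hl
  have hθ' : θ ∈ Icc (0 : ℝ) 1 := Ioo_subset_Icc_self hθ
  have hγ : Integrable (fun p : Fin 2 × ℝ => ((p.1 : ℕ) : ℝ)) (spikeSlabMeasure l1 l0 θ) :=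
    .of_bound (by fun_prop) 1 (.of_forall fun ⟨i, _⟩ => by fin_cases i <;> simp)
  have hp : Integrable (fun p : Fin 2 × ℝ => pstar l1 l0 θ p.2) (spikeSlabMeasure l1 l0 θ) :=
    .of_bound ((measurable_pstar l1 l0 θ).comp measurable_snd).aestronglyMeasurable 1
      (.of_forall fun p => norm_pstar_le_one hl1.le hl0.le hθ' p.2)
  refine comp_snd_ae_eq_condExp_comap_snd hγ (measurable_pstar l1 l0 θ).stronglyMeasurable hp
    fun t ht => ?_
  rw [setIntegral_spikeSlabMeasure_preimage_snd hl1.le hl0.le hθ' hp ht,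
    setIntegral_spikeSlabMeasure_preimage_snd hl1.le hl0.le hθ' hγ ht,
    setIntegral_laplacePDF_mul_pstar hl1 hl0 hθ]
  simp only [Fin.val_one, Fin.val_zero, Nat.cast_one, Nat.cast_zero, mul_one, mul_zero,
    integral_zero, add_zero]
end
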